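/- For each i ∈ {1, …, 6}, with fᵢ = (1/√3)·x^{5(i−1)} ∈ ℂ, the set of elements of Δ₀ that are real multiples of fᵢ, namely {z ∈ Δ₀ : ∃ λ ∈ ℝ, z = λ·fᵢ}, equals the additive subgroup of ℂ generated by fᵢ and √3·fᵢ; equivalently it equals {(a + b√3)·fᵢ : a, b ∈ ℤ}. (In particular, for i = 1 this subgroup is generated by f₁ and f₆ − f₂, since f₆ − f₂ = √3·f₁.) -/
import Mathlib


/-- `x = exp(πi/6)`, a primitive 12th root of unity. -/
noncomputable def x : ℂ := Complex.exp (Real.pi * Complex.I / 6)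

/-- `Δ₀ = (1/√3)·ℤ[x]`, the additive subgroup of `ℂ` generated by
`(1/√3)·x^k`, `0 ≤ k ≤ 5`. -/
def Delta0 : Set ℂ :=
  {z | ∃ n : Fin 6 → ℤ,
    z = ∑ k : Fin 6, (n k : ℂ) * ((1 / (Real.sqrt 3 : ℂ)) * x ^ (k : ℕ))}

/-- `fᵢ = (1/√3)·x^{5(i−1)}` (here `i` ranges over `1,…,6`). -/
noncomputable def f (i : ℕ) : ℂ := (1 / (Real.sqrt 3 : ℂ)) * x ^ (5 * (i - 1))

lemma hx_eq : x = ((Real.sqrt 3 : ℂ) + Complex.I)/2 := by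
  have h : (Real.pi : ℂ) * Complex.I / 6 = ((Real.pi/6 : ℝ) : ℂ) * Complex.I := by
    push_cast; ring
  rw [x, h, Complex.exp_mul_I, ← Complex.ofReal_cos, ← Complex.ofReal_sin]
  rw [Real.cos_pi_div_six, Real.sin_pi_div_six]
  push_cast; ring

lemma hs3 : (Real.sqrt 3 : ℂ)^2 = 3 := by
  norm_cast; rw [Real.sq_sqrt]; norm_num

lemma hsne : (Real.sqrt 3 : ℂ) ≠ 0 := by
  norm_cast; positivity

lemma px2 : x^2 = (Real.sqrt 3:ℂ)*x - 1 := by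
  rw [hx_eq]
  linear_combination (-(1:ℂ)/4) * hs3 + (1/4 : ℂ) * Complex.I_sq

lemma px3 : x^3 = -(Real.sqrt 3:ℂ) + 2*x := by
  linear_combination (x + (Real.sqrt 3:ℂ)) * px2 + x * hs3

lemma px4 : x^4 = -2 + (Real.sqrt 3:ℂ)*x := by
  linear_combination x*px3 + 2*px2

lemma px5 : x^5 = -(Real.sqrt 3:ℂ) + x := by
  linear_combination x*px4 + (Real.sqrt 3:ℂ)*px2 + x*hs3

lemma px6 : x^6 = -1 := by
  linear_combination x*px5 + px2

lemma px10 : x^10 = 2 - (Real.sqrt 3:ℂ)*x := by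
  linear_combination x^4*px6 - px4

lemma px15 : x^15 = -(Real.sqrt 3:ℂ) + 2*x := by
  linear_combination (x^9 - x^3)*px6 + px3

lemma px20 : x^20 = 1 - (Real.sqrt 3:ℂ)*x := by
  linear_combination (x^14 - x^8 + x^2)*px6 - px2

lemma px25 : x^25 = x := by
  linear_combination (x^19 - x^13 + x^7 - x)*px6

lemma pairR (a b c d : ℝ) (h : (a:ℂ) + (b:ℂ)*x = (c:ℂ) + (d:ℂ)*x) : a = c ∧ b = d := by
  rw [hx_eq] at h
  rw [Complex.ext_iff] at h
  simp [Complex.add_re, Complex.add_im, Complex.mul_re, Complex.mul_im, Complex.div_re,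
    Complex.div_im, Complex.normSq] at h
  obtain ⟨h1, h2⟩ := h
  have hbd : b = d := by linarith
  subst hbd
  exact ⟨by linarith, rfl⟩

lemma keyZ (p q : ℤ) (h : (p:ℝ) + (q:ℝ)*Real.sqrt 3 = 0) : p = 0 ∧ q = 0 := by
  have irr : Irrational (Real.sqrt 3) := (by norm_num : Nat.Prime 3).irrational_sqrt
  by_cases hq : q = 0
  · subst hq; simp at h; exact ⟨by exact_mod_cast h, rfl⟩
  · exfalso
    have hq' : (q:ℝ) ≠ 0 := Int.cast_ne_zero.mpr hq
    refine irr ⟨-p/q, ?_⟩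
    push_cast
    field_simp
    linarith

lemma h3r : Real.sqrt 3 ^ 2 = 3 := Real.sq_sqrt (by norm_num)

lemma hinv : (1 / (Real.sqrt 3 : ℂ)) = (Real.sqrt 3:ℂ)/3 := by
  rw [div_eq_div_iff hsne (by norm_num)]
  linear_combination -hs3

lemma hinv' : ((Real.sqrt 3:ℂ))⁻¹ = (Real.sqrt 3:ℂ)/3 := by
  rw [← one_div]; exact hinv

set_option maxHeartbeats 1000000 in
theorem stmt13 (i : ℕ) (h1 : 1 ≤ i) (h6 : i ≤ 6) :
    {z : ℂ | z ∈ Delta0 ∧ ∃ lam : ℝ, z = (lam : ℂ) * f i} =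
      {z : ℂ | ∃ a b : ℤ, z = ((a : ℂ) + (b : ℂ) * (Real.sqrt 3 : ℂ)) * f i} := by
  interval_cases i
  -- i = 1
  · ext z
    simp only [Set.mem_setOf_eq]
    constructor
    · rintro ⟨⟨n, hn⟩, lam, hl⟩
      have heq : (∑ k : Fin 6, (n k : ℂ) * ((1 / (Real.sqrt 3 : ℂ)) * x ^ (k : ℕ))) = ↑lam * f 1 := by
        rw [← hn, hl]
      simp only [Fin.sum_univ_six, Fin.isValue, Fin.val_zero, Fin.val_one, f,
        show ((2:Fin 6):ℕ) = 2 from rfl, show ((3:Fin 6):ℕ) = 3 from rfl,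
        show ((4:Fin 6):ℕ) = 4 from rfl, show ((5:Fin 6):ℕ) = 5 from rfl] at heq
      norm_num at heq
      field_simp at heq
      rw [px2, px3, px4, px5] at heq
      have hpair := pairR ((n 0 : ℝ) - n 2 - 2*n 4 + (-(n 3 : ℝ) - n 5)*Real.sqrt 3)
          ((n 1 : ℝ) + 2*n 3 + n 5 + ((n 2 : ℝ) + n 4)*Real.sqrt 3) lam 0
          (by push_cast; linear_combination heq)
      obtain ⟨hA, _⟩ := hpair
      refine ⟨n 0 - n 2 - 2*n 4, -(n 3) - n 5, ?_⟩
      rw [hl]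
      have hlc : (lam:ℂ) = ((n 0 - n 2 - 2*n 4 : ℤ):ℂ) + ((-(n 3) - n 5 : ℤ):ℂ) * (Real.sqrt 3:ℂ) := by
        rw [← hA]; push_cast; ring
      rw [hlc]
    · rintro ⟨a, b, hz⟩
      refine ⟨⟨![a, b, 0, 0, 0, -b], ?_⟩, ⟨a + b*Real.sqrt 3, ?_⟩⟩
      · rw [hz]
        simp [Fin.sum_univ_six, f,
          show ((2:Fin 6):ℕ) = 2 from rfl, show ((3:Fin 6):ℕ) = 3 from rfl,
          show ((4:Fin 6):ℕ) = 4 from rfl, show ((5:Fin 6):ℕ) = 5 from rfl,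
          show (![a, b, 0, 0, 0, -b] 5) = -b from rfl]
        field_simp
        rw [px5]
        ring
      · rw [hz]; push_cast; ring
  -- i = 2
  · ext z
    simp only [Set.mem_setOf_eq]
    constructor
    · rintro ⟨⟨n, hn⟩, lam, hl⟩
      have heq : (∑ k : Fin 6, (n k : ℂ) * ((1 / (Real.sqrt 3 : ℂ)) * x ^ (k : ℕ))) = ↑lam * f 2 := by
        rw [← hn, hl]
      simp only [Fin.sum_univ_six, Fin.isValue, Fin.val_zero, Fin.val_one, f,
        show ((2:Fin 6):ℕ) = 2 from rfl, show ((3:Fin 6):ℕ) = 3 from rfl,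
        show ((4:Fin 6):ℕ) = 4 from rfl, show ((5:Fin 6):ℕ) = 5 from rfl] at heq
      norm_num at heq
      field_simp at heq
      simp only [px2, px3, px4, px5, px10, px15, px20, px25] at heq
      have hpair := pairR ((n 0 : ℝ) - n 2 - 2*n 4 + (-(n 3 : ℝ) - n 5)*Real.sqrt 3)
          ((n 1 : ℝ) + 2*n 3 + n 5 + ((n 2 : ℝ) + n 4)*Real.sqrt 3) (-(lam*Real.sqrt 3)) (lam)
          (by push_cast; linear_combination heq)
      obtain ⟨hA, hB⟩ := hpair
      refine ⟨n 1 + 2*n 3 + n 5, n 2 + n 4, ?_⟩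
      rw [hl]
      have hlc : (lam:ℂ) = ((n 1 + 2*n 3 + n 5 : ℤ):ℂ) + ((n 2 + n 4 : ℤ):ℂ) * (Real.sqrt 3:ℂ) := by
        rw [← hB]; push_cast; ring
      rw [hlc]
    · rintro ⟨a, b, hz⟩
      refine ⟨⟨![-b, 0, 0, 0, b, a], ?_⟩, ⟨a + b*Real.sqrt 3, ?_⟩⟩
      · rw [hz]
        simp only [Fin.sum_univ_six, Fin.isValue, Fin.val_zero, Fin.val_one, f,
          show ((2:Fin 6):ℕ) = 2 from rfl, show ((3:Fin 6):ℕ) = 3 from rfl,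
        show ((4:Fin 6):ℕ) = 4 from rfl, show ((5:Fin 6):ℕ) = 5 from rfl,
          show ((![-b, 0, 0, 0, b, a] : Fin 6 → ℤ) 0 : ℤ) = -b from rfl,
          show ((![-b, 0, 0, 0, b, a] : Fin 6 → ℤ) 1 : ℤ) = 0 from rfl,
          show ((![-b, 0, 0, 0, b, a] : Fin 6 → ℤ) 2 : ℤ) = 0 from rfl,
          show ((![-b, 0, 0, 0, b, a] : Fin 6 → ℤ) 3 : ℤ) = 0 from rfl,
          show ((![-b, 0, 0, 0, b, a] : Fin 6 → ℤ) 4 : ℤ) = b from rfl,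
          show ((![-b, 0, 0, 0, b, a] : Fin 6 → ℤ) 5 : ℤ) = a from rfl,
          show ((5*(2-1):ℕ)) = 5 from rfl, hinv]
        push_cast
        simp only [px2, px3, px4, px5, px10, px15, px20, px25]
        linear_combination (-(Real.sqrt 3:ℂ)*(b:ℂ)/3) * hs3
      · rw [hz]; push_cast; ring
  -- i = 3
  · ext z
    simp only [Set.mem_setOf_eq]
    constructor
    · rintro ⟨⟨n, hn⟩, lam, hl⟩
      have heq : (∑ k : Fin 6, (n k : ℂ) * ((1 / (Real.sqrt 3 : ℂ)) * x ^ (k : ℕ))) = ↑lam * f 3 := by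
        rw [← hn, hl]
      simp only [Fin.sum_univ_six, Fin.isValue, Fin.val_zero, Fin.val_one, f,
        show ((2:Fin 6):ℕ) = 2 from rfl, show ((3:Fin 6):ℕ) = 3 from rfl,
        show ((4:Fin 6):ℕ) = 4 from rfl, show ((5:Fin 6):ℕ) = 5 from rfl] at heq
      norm_num at heq
      field_simp at heq
      simp only [px2, px3, px4, px5, px10, px15, px20, px25] at heq
      have hpair := pairR ((n 0 : ℝ) - n 2 - 2*n 4 + (-(n 3 : ℝ) - n 5)*Real.sqrt 3)
          ((n 1 : ℝ) + 2*n 3 + n 5 + ((n 2 : ℝ) + n 4)*Real.sqrt 3) (2*lam) (-(lam*Real.sqrt 3))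
          (by push_cast; linear_combination heq)
      obtain ⟨hA, hB⟩ := hpair
      have hZ := keyZ (3*(-(n 3) - n 5) + 2*(n 1 + 2*n 3 + n 5)) ((n 0 - n 2 - 2*n 4) + 2*(n 2 + n 4))
          (by push_cast; linear_combination Real.sqrt 3 * hA + 2*hB + ((n 3:ℝ) + n 5) * h3r)
      obtain ⟨h3q, hpq⟩ := hZ
      obtain ⟨b, hb⟩ : ∃ b, -(n 3) - n 5 = 2*b := ⟨(-(n 3) - n 5)/2, by omega⟩
      refine ⟨-(n 2 + n 4), b, ?_⟩
      rw [hl]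
      have hb' : (-(n 3:ℝ) - n 5) = 2*(b:ℝ) := by exact_mod_cast hb
      have hpq' : ((n 0:ℝ) - n 2 - 2*n 4) + 2*((n 2:ℝ) + n 4) = 0 := by exact_mod_cast hpq
      have hr : lam = (-((n 2:ℝ) + n 4)) + (b:ℝ)*Real.sqrt 3 := by
        linear_combination (-1/2 : ℝ)*hA + (1/2 : ℝ)*hpq' + (Real.sqrt 3/2)*hb'
      have hlc : (lam:ℂ) = ((-(n 2 + n 4) : ℤ):ℂ) + ((b : ℤ):ℂ) * (Real.sqrt 3:ℂ) := by
        have := congrArg Complex.ofReal hr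
        push_cast at this ⊢
        linear_combination this
      rw [hlc]
    · rintro ⟨a, b, hz⟩
      refine ⟨⟨![a, -b, -a, 0, 0, -2*b], ?_⟩, ⟨a + b*Real.sqrt 3, ?_⟩⟩
      · rw [hz]
        simp only [Fin.sum_univ_six, Fin.isValue, Fin.val_zero, Fin.val_one, f,
          show ((2:Fin 6):ℕ) = 2 from rfl, show ((3:Fin 6):ℕ) = 3 from rfl,
        show ((4:Fin 6):ℕ) = 4 from rfl, show ((5:Fin 6):ℕ) = 5 from rfl,
          show ((![a, -b, -a, 0, 0, -2*b] : Fin 6 → ℤ) 0 : ℤ) = a from rfl,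
          show ((![a, -b, -a, 0, 0, -2*b] : Fin 6 → ℤ) 1 : ℤ) = -b from rfl,
          show ((![a, -b, -a, 0, 0, -2*b] : Fin 6 → ℤ) 2 : ℤ) = -a from rfl,
          show ((![a, -b, -a, 0, 0, -2*b] : Fin 6 → ℤ) 3 : ℤ) = 0 from rfl,
          show ((![a, -b, -a, 0, 0, -2*b] : Fin 6 → ℤ) 4 : ℤ) = 0 from rfl,
          show ((![a, -b, -a, 0, 0, -2*b] : Fin 6 → ℤ) 5 : ℤ) = -2*b from rfl,
          show ((5*(3-1):ℕ)) = 10 from rfl, hinv]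
        push_cast
        simp only [px2, px3, px4, px5, px10, px15, px20, px25]
        linear_combination (-(Real.sqrt 3:ℂ)*x*(b:ℂ)/3) * hs3
      · rw [hz]; push_cast; ring
  -- i = 4
  · ext z
    simp only [Set.mem_setOf_eq]
    constructor
    · rintro ⟨⟨n, hn⟩, lam, hl⟩
      have heq : (∑ k : Fin 6, (n k : ℂ) * ((1 / (Real.sqrt 3 : ℂ)) * x ^ (k : ℕ))) = ↑lam * f 4 := by
        rw [← hn, hl]
      simp only [Fin.sum_univ_six, Fin.isValue, Fin.val_zero, Fin.val_one, f,
        show ((2:Fin 6):ℕ) = 2 from rfl, show ((3:Fin 6):ℕ) = 3 from rfl,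
        show ((4:Fin 6):ℕ) = 4 from rfl, show ((5:Fin 6):ℕ) = 5 from rfl] at heq
      norm_num at heq
      field_simp at heq
      simp only [px2, px3, px4, px5, px10, px15, px20, px25] at heq
      have hpair := pairR ((n 0 : ℝ) - n 2 - 2*n 4 + (-(n 3 : ℝ) - n 5)*Real.sqrt 3)
          ((n 1 : ℝ) + 2*n 3 + n 5 + ((n 2 : ℝ) + n 4)*Real.sqrt 3) (-(lam*Real.sqrt 3)) (2*lam)
          (by push_cast; linear_combination heq)
      obtain ⟨hA, hB⟩ := hpair
      have hZ := keyZ (2*(n 0 - n 2 - 2*n 4) + 3*(n 2 + n 4)) (2*(-(n 3) - n 5) + (n 1 + 2*n 3 + n 5))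
          (by push_cast; linear_combination 2*hA + Real.sqrt 3 * hB + (-(n 2:ℝ) - n 4) * h3r)
      obtain ⟨h3q, hpq⟩ := hZ
      obtain ⟨b, hb⟩ : ∃ b, n 2 + n 4 = 2*b := ⟨(n 2 + n 4)/2, by omega⟩
      refine ⟨n 3 + n 5, b, ?_⟩
      rw [hl]
      have hb' : ((n 2:ℝ) + n 4) = 2*(b:ℝ) := by exact_mod_cast hb
      have hpq' : 2*(-(n 3:ℝ) - n 5) + ((n 1:ℝ) + 2*n 3 + n 5) = 0 := by exact_mod_cast hpq
      have hr : lam = ((n 3:ℝ) + n 5) + (b:ℝ)*Real.sqrt 3 := by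
        linear_combination (-1/2 : ℝ)*hB + (1/2 : ℝ)*hpq' + (Real.sqrt 3/2)*hb'
      have hlc : (lam:ℂ) = ((n 3 + n 5 : ℤ):ℂ) + ((b : ℤ):ℂ) * (Real.sqrt 3:ℂ) := by
        have := congrArg Complex.ofReal hr
        push_cast at this ⊢
        linear_combination this
      rw [hlc]
    · rintro ⟨a, b, hz⟩
      refine ⟨⟨![-b, a, 2*b, 0, 0, a], ?_⟩, ⟨a + b*Real.sqrt 3, ?_⟩⟩
      · rw [hz]
        simp only [Fin.sum_univ_six, Fin.isValue, Fin.val_zero, Fin.val_one, f,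
          show ((2:Fin 6):ℕ) = 2 from rfl, show ((3:Fin 6):ℕ) = 3 from rfl,
        show ((4:Fin 6):ℕ) = 4 from rfl, show ((5:Fin 6):ℕ) = 5 from rfl,
          show ((![-b, a, 2*b, 0, 0, a] : Fin 6 → ℤ) 0 : ℤ) = -b from rfl,
          show ((![-b, a, 2*b, 0, 0, a] : Fin 6 → ℤ) 1 : ℤ) = a from rfl,
          show ((![-b, a, 2*b, 0, 0, a] : Fin 6 → ℤ) 2 : ℤ) = 2*b from rfl,
          show ((![-b, a, 2*b, 0, 0, a] : Fin 6 → ℤ) 3 : ℤ) = 0 from rfl,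
          show ((![-b, a, 2*b, 0, 0, a] : Fin 6 → ℤ) 4 : ℤ) = 0 from rfl,
          show ((![-b, a, 2*b, 0, 0, a] : Fin 6 → ℤ) 5 : ℤ) = a from rfl,
          show ((5*(4-1):ℕ)) = 15 from rfl, hinv]
        push_cast
        simp only [px2, px3, px4, px5, px10, px15, px20, px25]
        linear_combination (-(Real.sqrt 3:ℂ)*(b:ℂ)/3) * hs3
      · rw [hz]; push_cast; ring
  -- i = 5
  · ext z
    simp only [Set.mem_setOf_eq]
    constructor
    · rintro ⟨⟨n, hn⟩, lam, hl⟩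
      have heq : (∑ k : Fin 6, (n k : ℂ) * ((1 / (Real.sqrt 3 : ℂ)) * x ^ (k : ℕ))) = ↑lam * f 5 := by
        rw [← hn, hl]
      simp only [Fin.sum_univ_six, Fin.isValue, Fin.val_zero, Fin.val_one, f,
        show ((2:Fin 6):ℕ) = 2 from rfl, show ((3:Fin 6):ℕ) = 3 from rfl,
        show ((4:Fin 6):ℕ) = 4 from rfl, show ((5:Fin 6):ℕ) = 5 from rfl] at heq
      norm_num at heq
      field_simp at heq
      simp only [px2, px3, px4, px5, px10, px15, px20, px25] at heq
      have hpair := pairR ((n 0 : ℝ) - n 2 - 2*n 4 + (-(n 3 : ℝ) - n 5)*Real.sqrt 3)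
          ((n 1 : ℝ) + 2*n 3 + n 5 + ((n 2 : ℝ) + n 4)*Real.sqrt 3) (lam) (-(lam*Real.sqrt 3))
          (by push_cast; linear_combination heq)
      obtain ⟨hA, hB⟩ := hpair
      refine ⟨n 0 - n 2 - 2*n 4, -(n 3) - n 5, ?_⟩
      rw [hl]
      have hlc : (lam:ℂ) = ((n 0 - n 2 - 2*n 4 : ℤ):ℂ) + ((-(n 3) - n 5 : ℤ):ℂ) * (Real.sqrt 3:ℂ) := by
        rw [← hA]; push_cast; ring
      rw [hlc]
    · rintro ⟨a, b, hz⟩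
      refine ⟨⟨![0, -2*b, -a, 0, 0, -b], ?_⟩, ⟨a + b*Real.sqrt 3, ?_⟩⟩
      · rw [hz]
        simp only [Fin.sum_univ_six, Fin.isValue, Fin.val_zero, Fin.val_one, f,
          show ((2:Fin 6):ℕ) = 2 from rfl, show ((3:Fin 6):ℕ) = 3 from rfl,
        show ((4:Fin 6):ℕ) = 4 from rfl, show ((5:Fin 6):ℕ) = 5 from rfl,
          show ((![0, -2*b, -a, 0, 0, -b] : Fin 6 → ℤ) 0 : ℤ) = 0 from rfl,
          show ((![0, -2*b, -a, 0, 0, -b] : Fin 6 → ℤ) 1 : ℤ) = -2*b from rfl,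
          show ((![0, -2*b, -a, 0, 0, -b] : Fin 6 → ℤ) 2 : ℤ) = -a from rfl,
          show ((![0, -2*b, -a, 0, 0, -b] : Fin 6 → ℤ) 3 : ℤ) = 0 from rfl,
          show ((![0, -2*b, -a, 0, 0, -b] : Fin 6 → ℤ) 4 : ℤ) = 0 from rfl,
          show ((![0, -2*b, -a, 0, 0, -b] : Fin 6 → ℤ) 5 : ℤ) = -b from rfl,
          show ((5*(5-1):ℕ)) = 20 from rfl, hinv]
        push_cast
        simp only [px2, px3, px4, px5, px10, px15, px20, px25]
        linear_combination (-(Real.sqrt 3:ℂ)*x*(b:ℂ)/3) * hs3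
      · rw [hz]; push_cast; ring
  -- i = 6
  · ext z
    simp only [Set.mem_setOf_eq]
    constructor
    · rintro ⟨⟨n, hn⟩, lam, hl⟩
      have heq : (∑ k : Fin 6, (n k : ℂ) * ((1 / (Real.sqrt 3 : ℂ)) * x ^ (k : ℕ))) = ↑lam * f 6 := by
        rw [← hn, hl]
      simp only [Fin.sum_univ_six, Fin.isValue, Fin.val_zero, Fin.val_one, f,
        show ((2:Fin 6):ℕ) = 2 from rfl, show ((3:Fin 6):ℕ) = 3 from rfl,
        show ((4:Fin 6):ℕ) = 4 from rfl, show ((5:Fin 6):ℕ) = 5 from rfl] at heq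
      norm_num at heq
      field_simp at heq
      simp only [px2, px3, px4, px5, px10, px15, px20, px25] at heq
      have hpair := pairR ((n 0 : ℝ) - n 2 - 2*n 4 + (-(n 3 : ℝ) - n 5)*Real.sqrt 3)
          ((n 1 : ℝ) + 2*n 3 + n 5 + ((n 2 : ℝ) + n 4)*Real.sqrt 3) (0) (lam)
          (by push_cast; linear_combination heq)
      obtain ⟨hA, hB⟩ := hpair
      refine ⟨n 1 + 2*n 3 + n 5, n 2 + n 4, ?_⟩
      rw [hl]
      have hlc : (lam:ℂ) = ((n 1 + 2*n 3 + n 5 : ℤ):ℂ) + ((n 2 + n 4 : ℤ):ℂ) * (Real.sqrt 3:ℂ) := by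
        rw [← hB]; push_cast; ring
      rw [hlc]
    · rintro ⟨a, b, hz⟩
      refine ⟨⟨![b, a, b, 0, 0, 0], ?_⟩, ⟨a + b*Real.sqrt 3, ?_⟩⟩
      · rw [hz]
        simp only [Fin.sum_univ_six, Fin.isValue, Fin.val_zero, Fin.val_one, f,
          show ((2:Fin 6):ℕ) = 2 from rfl, show ((3:Fin 6):ℕ) = 3 from rfl,
        show ((4:Fin 6):ℕ) = 4 from rfl, show ((5:Fin 6):ℕ) = 5 from rfl,
          show ((![b, a, b, 0, 0, 0] : Fin 6 → ℤ) 0 : ℤ) = b from rfl,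
          show ((![b, a, b, 0, 0, 0] : Fin 6 → ℤ) 1 : ℤ) = a from rfl,
          show ((![b, a, b, 0, 0, 0] : Fin 6 → ℤ) 2 : ℤ) = b from rfl,
          show ((![b, a, b, 0, 0, 0] : Fin 6 → ℤ) 3 : ℤ) = 0 from rfl,
          show ((![b, a, b, 0, 0, 0] : Fin 6 → ℤ) 4 : ℤ) = 0 from rfl,
          show ((![b, a, b, 0, 0, 0] : Fin 6 → ℤ) 5 : ℤ) = 0 from rfl,
          show ((5*(6-1):ℕ)) = 25 from rfl, hinv]
        push_cast
        simp only [px2, px3, px4, px5, px10, px15, px20, px25]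
        ring
      · rw [hz]; push_cast; ring
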